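/- For every natural number n, ∫_{-1}^{1} P_n(t)/√(2 − 2t) dt = 2/(2n+1). -/

import Mathlib

/-!
By Rodrigues' formula, `P_n` is `(2ⁿ n!)⁻¹` times the `n`-th derivative of `(t² - 1)ⁿ`, and
`1 / √(2 - 2t) = (1 - t)^(-1/2) / √2`. Integrating by parts `n` times moves every derivative onto
the Jacobi weight `(1 - t)^a`: the boundary terms vanish because the `j`-th derivative of
`(t² - 1)ⁿ` still has zeros of order `n - j` at `±1`, which beats the growing singularity of the
weight. This leaves `∏_{i<n} (i + 1/2)` times the moment `∫ (1 + t)ⁿ (1 - t)^(-1/2) dt`, and one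
more integration by parts gives the recursion `(2n + 3) Mₙ₊₁ = 4 (n + 1) Mₙ` with `M₀ = 2√2`.
-/

open MeasureTheory Real Filter Topology Finset
open scoped RealInnerProductSpace

/-- Legendre polynomial `P_n(x) = (2^n n!)⁻¹ dⁿ/dxⁿ (x²-1)ⁿ`. -/
noncomputable def legendreP (n : ℕ) (x : ℝ) : ℝ :=
  ((2 : ℝ) ^ n * n.factorial)⁻¹ * iteratedDeriv n (fun t : ℝ => (t ^ 2 - 1) ^ n) x

open Polynomial

lemma eval_mul_one_sub_rpow {p q : ℝ[X]} {m : ℕ} (hp : p = (1 - X) ^ m * q) (a : ℝ) {t : ℝ}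
    (ht : t < 1) : p.eval t * (1 - t) ^ a = q.eval t * (1 - t) ^ (m + a) := by
  rw [hp, rpow_add (by linarith), rpow_natCast]
  simp only [eval_mul, eval_pow, eval_sub, eval_one, eval_X]
  ring

lemma intervalIntegrable_mul_one_sub_rpow {f : ℝ → ℝ} (hf : Continuous f) {b : ℝ} (hb : -1 < b) :
    IntervalIntegrable (fun t => f t * (1 - t) ^ b) volume (-1) 1 := by
  have hw : IntervalIntegrable (fun t : ℝ => (1 - t) ^ b) volume (-1) 1 := by
    have := (intervalIntegral.intervalIntegrable_rpow' hb (a := 2) (b := 0)).comp_sub_left 1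
    norm_num at this
    exact this
  exact hw.continuousOn_mul hf.continuousOn

lemma intervalIntegrable_eval_mul_one_sub_rpow_of_dvd {p : ℝ[X]} {m : ℕ} (hp : (1 - X) ^ m ∣ p)
    {a : ℝ} (ha : -1 < m + a) :
    IntervalIntegrable (fun t => p.eval t * (1 - t) ^ a) volume (-1) 1 := by
  obtain ⟨q, rfl⟩ := hp
  refine (intervalIntegrable_mul_one_sub_rpow q.continuous ha).congr_uIoo fun t ht => ?_
  rw [Set.uIoo_of_le (by norm_num)] at ht
  exact (eval_mul_one_sub_rpow rfl a ht.2).symm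

theorem integral_derivative_mul_one_sub_rpow {p : ℝ[X]} {m : ℕ} (hp : (1 - X) ^ m ∣ p)
    (hp₁ : p.IsRoot (-1)) {a : ℝ} (ha : 0 < m + a) :
    ∫ t in (-1 : ℝ)..1, (derivative p).eval t * (1 - t) ^ a =
      a * ∫ t in (-1 : ℝ)..1, p.eval t * (1 - t) ^ (a - 1) := by
  obtain ⟨q, hq⟩ := hp
  -- `F = p (1 - t)^a`, written through `q` so that it is visibly continuous at `t = 1`
  set F : ℝ → ℝ := fun t => q.eval t * (1 - t) ^ (m + a)
  have hF_cont : ContinuousOn F (Set.Icc (-1) 1) :=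
    (q.continuous.mul ((continuous_const.sub continuous_id).rpow_const
      fun _ => Or.inr ha.le)).continuousOn
  have hF_eq {t : ℝ} (ht : t < 1) : F t = p.eval t * (1 - t) ^ a :=
    (eval_mul_one_sub_rpow hq a ht).symm
  have hF_deriv : ∀ t ∈ Set.Ioo (-1 : ℝ) 1, HasDerivWithinAt F
      ((derivative p).eval t * (1 - t) ^ a - a * (p.eval t * (1 - t) ^ (a - 1))) (Set.Ioi t) t := by
    intro t ht
    have hw : HasDerivAt (fun s => (1 - s) ^ a) (-1 * a * (1 - t) ^ (a - 1)) t := by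
      simpa using ((hasDerivAt_id t).const_sub 1).rpow_const (p := a)
        (Or.inl (sub_ne_zero.2 ht.2.ne'))
    have := (p.hasDerivAt t).mul hw
    refine (this.congr_of_eventuallyEq ?_).hasDerivWithinAt.congr_deriv (by ring)
    filter_upwards [Iio_mem_nhds ht.2] with s hs using hF_eq hs
  have hint₁ : IntervalIntegrable (fun t => (derivative p).eval t * (1 - t) ^ a) volume (-1) 1 := by
    refine intervalIntegrable_eval_mul_one_sub_rpow_of_dvd
      (pow_sub_one_dvd_derivative_of_pow_dvd ⟨q, hq⟩) ?_
    have hm : (m : ℝ) ≤ ((m - 1 : ℕ) : ℝ) + 1 := by exact_mod_cast (by omega : m ≤ m - 1 + 1)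
    linarith
  have hint₂ : IntervalIntegrable (fun t => p.eval t * (1 - t) ^ (a - 1)) volume (-1) 1 :=
    intervalIntegrable_eval_mul_one_sub_rpow_of_dvd ⟨q, hq⟩ (by linarith)
  have hFTC := intervalIntegral.integral_eq_sub_of_hasDeriv_right_of_le (by norm_num)
    hF_cont hF_deriv (hint₁.sub (hint₂.const_mul a))
  have hF₁ : F 1 = 0 := by simp [F, zero_rpow ha.ne']
  have hF₀ : F (-1) = 0 := by rw [hF_eq (by norm_num), hp₁.eq_zero, zero_mul]
  rw [intervalIntegral.integral_sub hint₁ (hint₂.const_mul a), intervalIntegral.integral_const_mul,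
    hF₁, hF₀, sub_zero] at hFTC
  linarith

lemma iteratedDeriv_eval (p : ℝ[X]) (n : ℕ) :
    iteratedDeriv n (fun x => p.eval x) = fun x => (derivative^[n] p).eval x := by
  induction n generalizing p with
  | zero => simp
  | succ n ih =>
    rw [iteratedDeriv_succ', _root_.funext fun x => p.deriv (x := x), ih,
      Function.iterate_succ_apply]

lemma legendreP_eq_eval (n : ℕ) (x : ℝ) :
    legendreP n x = ((2 : ℝ) ^ n * n.factorial)⁻¹ *
      (derivative^[n] ((X ^ 2 - 1 : ℝ[X]) ^ n)).eval x := by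
  have h : (fun t : ℝ => (t ^ 2 - 1) ^ n) = fun t => ((X ^ 2 - 1 : ℝ[X]) ^ n).eval t := by
    simp
  rw [legendreP, h, iteratedDeriv_eval]

/-- Up to a constant, `∫ P_n(t) (1 - t)^(-1/2) dt` after `n - j` integrations by parts. -/
noncomputable def rodriguesIntegral (n j : ℕ) : ℝ :=
  ∫ t in (-1 : ℝ)..1,
    (derivative^[j] ((X ^ 2 - 1 : ℝ[X]) ^ n)).eval t * (1 - t) ^ ((j : ℝ) - n - 1 / 2)

lemma rodriguesIntegral_succ {n j : ℕ} (hj : j < n) :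
    rodriguesIntegral n (j + 1) = ((j : ℝ) + 1 / 2 - n) * rodriguesIntegral n j := by
  have hdvd : (X ^ 2 - 1 : ℝ[X]) ^ (n - j) ∣ derivative^[j] ((X ^ 2 - 1) ^ n) :=
    pow_sub_dvd_iterate_derivative_pow _ n j
  have hdvd₁ : (1 - X : ℝ[X]) ^ (n - j) ∣ derivative^[j] ((X ^ 2 - 1) ^ n) :=
    (pow_dvd_pow_of_dvd ⟨-(X + 1), by ring⟩ _).trans hdvd
  have hroot : (derivative^[j] ((X ^ 2 - 1 : ℝ[X]) ^ n)).IsRoot (-1) := by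
    rw [← dvd_iff_isRoot]
    refine (dvd_pow ⟨X - 1, ?_⟩ (by omega)).trans hdvd
    simp only [map_neg, map_one]
    ring
  have key := integral_derivative_mul_one_sub_rpow hdvd₁ hroot
    (a := (j : ℝ) + 1 - n - 1 / 2) (by rw [Nat.cast_sub hj.le]; linarith)
  rw [← Function.iterate_succ_apply' derivative] at key
  have e₁ : ((j + 1 : ℕ) : ℝ) - n - 1 / 2 = (j : ℝ) + 1 - n - 1 / 2 := by push_cast; ring
  have e₂ : (j : ℝ) + 1 - n - 1 / 2 - 1 = (j : ℝ) - n - 1 / 2 := by ring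
  rw [rodriguesIntegral, rodriguesIntegral, e₁, key, e₂]
  ring

lemma rodriguesIntegral_eq_prod_mul {n j : ℕ} (hj : j ≤ n) :
    rodriguesIntegral n j = (∏ i ∈ range j, ((i : ℝ) + 1 / 2 - n)) * rodriguesIntegral n 0 := by
  induction j with
  | zero => simp
  | succ j ih => rw [rodriguesIntegral_succ hj, ih (by omega), prod_range_succ]; ring

noncomputable def invSqrtMoment (n : ℕ) : ℝ :=
  ∫ t in (-1 : ℝ)..1, (t + 1) ^ n * (1 - t) ^ (-(1 / 2) : ℝ)

lemma rodriguesIntegral_zero (n : ℕ) : rodriguesIntegral n 0 = (-1) ^ n * invSqrtMoment n := by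
  have hfac : (X ^ 2 - 1 : ℝ[X]) ^ n = (1 - X) ^ n * (-(X + 1)) ^ n := by
    rw [← mul_pow]; ring
  rw [rodriguesIntegral, invSqrtMoment, ← intervalIntegral.integral_const_mul]
  refine intervalIntegral.integral_congr_Ioo_of_le (by norm_num) fun t ht => ?_
  have hexp : (n : ℝ) + ((0 : ℕ) - n - 1 / 2) = -(1 / 2) := by push_cast; ring
  rw [Function.iterate_zero_apply, eval_mul_one_sub_rpow hfac _ ht.2, hexp]
  simp only [eval_pow, eval_neg, eval_add, eval_X, eval_one, neg_pow (t + 1)]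
  ring

lemma rodriguesIntegral_self (n : ℕ) :
    rodriguesIntegral n n = (∏ i ∈ range n, ((i : ℝ) + 1 / 2)) * invSqrtMoment n := by
  have hprod : (∏ i ∈ range n, ((i : ℝ) + 1 / 2 - n)) * (-1) ^ n =
      ∏ i ∈ range n, ((i : ℝ) + 1 / 2) := by
    rw [← prod_range_reflect (fun i : ℕ => (i : ℝ) + 1 / 2) n,
      show (-1 : ℝ) ^ n = ∏ _i ∈ range n, (-1) by simp, ← prod_mul_distrib]
    refine prod_congr rfl fun i hi => ?_
    rw [Nat.sub_sub, Nat.cast_sub (by simp at hi; omega)]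
    push_cast
    ring
  rw [rodriguesIntegral_eq_prod_mul le_rfl, rodriguesIntegral_zero, ← mul_assoc, hprod]

lemma invSqrtMoment_zero : invSqrtMoment 0 = 2 * √2 := by
  simp only [invSqrtMoment, pow_zero, one_mul]
  rw [intervalIntegral.integral_comp_sub_left (fun x => x ^ (-(1 / 2) : ℝ)),
    integral_rpow (Or.inl (by norm_num)), sqrt_eq_rpow]
  norm_num
  field_simp

lemma invSqrtMoment_succ (n : ℕ) :
    (2 * n + 3) * invSqrtMoment (n + 1) = 4 * (n + 1) * invSqrtMoment n := by
  have key := integral_derivative_mul_one_sub_rpow (p := (X + 1) ^ (n + 1)) (m := 0)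
    (by simp) (by simp) (a := 1 / 2) (by norm_num)
  have hintegrable (k : ℕ) :=
    intervalIntegrable_mul_one_sub_rpow (f := fun t => (t + 1) ^ k) (by fun_prop)
      (b := -(1 / 2)) (by norm_num)
  have hlhs : ∫ t in (-1 : ℝ)..1, (derivative ((X + 1) ^ (n + 1))).eval t * (1 - t) ^ (1 / 2 : ℝ)
      = (n + 1) * (2 * invSqrtMoment n - invSqrtMoment (n + 1)) := by
    rw [invSqrtMoment, invSqrtMoment, ← intervalIntegral.integral_const_mul,
      ← intervalIntegral.integral_sub (hintegrable n |>.const_mul _) (hintegrable (n + 1)),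
      ← intervalIntegral.integral_const_mul]
    refine intervalIntegral.integral_congr_Ioo_of_le (by norm_num) fun t ht => ?_
    have hsqrt : (1 - t) ^ (1 / 2 : ℝ) = (1 - t) * (1 - t) ^ (-(1 / 2) : ℝ) := by
      rw [← rpow_one_add' (by linarith [ht.2]) (by norm_num)]
      norm_num
    rw [hsqrt]
    simp only [derivative_pow, derivative_add, derivative_X, derivative_one, eval_mul, eval_pow,
      eval_add, eval_X, eval_one, eval_C, add_zero, mul_one, add_tsub_cancel_right]
    push_cast
    ring
  simp only [eval_pow, eval_add, eval_X, eval_one,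
    show (1 / 2 : ℝ) - 1 = -(1 / 2) by norm_num] at key
  rw [hlhs, ← invSqrtMoment] at key
  linear_combination (-2) * key

lemma prod_mul_invSqrtMoment (n : ℕ) :
    (∏ i ∈ range n, ((i : ℝ) + 1 / 2)) * invSqrtMoment n * (2 * n + 1) =
      2 * √2 * 2 ^ n * n.factorial := by
  induction n with
  | zero => simp [invSqrtMoment_zero]
  | succ n ih =>
    rw [prod_range_succ, Nat.factorial_succ]
    push_cast
    linear_combination (∏ i ∈ range n, ((i : ℝ) + 1 / 2)) * (n + 1 / 2) * invSqrtMoment_succ n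
      + 2 * (n + 1) * ih

lemma integral_legendreP_div_sqrt (n : ℕ) :
    ∫ t in (-1 : ℝ)..1, legendreP n t / √(2 - 2 * t) =
      (2 ^ n * n.factorial * √2)⁻¹ * rodriguesIntegral n n := by
  rw [rodriguesIntegral, ← intervalIntegral.integral_const_mul]
  refine intervalIntegral.integral_congr_Ioo_of_le (by norm_num) fun t ht => ?_
  have hpos : 0 < 1 - t := by linarith [ht.2]
  rw [legendreP_eq_eval, show 2 - 2 * t = 2 * (1 - t) by ring, sqrt_mul zero_le_two,
    sqrt_eq_rpow (1 - t), show (n : ℝ) - n - 1 / 2 = -(1 / 2) by ring, rpow_neg hpos.le]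
  field_simp

/-- `∫_{-1}^1 P_n(t)/√(2-2t) dt = 2/(2n+1)`. -/
theorem funk_hecke_eigenvalue (n : ℕ) :
    ∫ t in (-1 : ℝ)..1, legendreP n t / Real.sqrt (2 - 2 * t) = 2 / (2 * n + 1) := by
  rw [integral_legendreP_div_sqrt, rodriguesIntegral_self, eq_div_iff (by positivity), mul_assoc,
    mul_assoc, prod_mul_invSqrtMoment]
  field_simp
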